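/- arXiv:2112.11584 — 15 statements merged into one kernel-verified Lean document; each statement's English description precedes it below -/
import Mathlib

section
/- Let K be a pointed closed convex cone in ℝⁿ with nonempty interior, inducing partial order ⪯. For any x ∈ ℝⁿ and any open neighborhood U of x, there exist points a, b ∈ U with b ⪯ x ⪯ a such that x ∈ interior(a↓ ∩ b↑) and a↓ ∩ b↑ ⊆ U. -/
/-!
A closed pointed cone `K` in a finite-dimensional space is normal: `e - z, e + z ∈ K` forces
`‖z‖ ≤ C ‖e‖`, because `v ↦ infDist v K + infDist v (-K)` is positive on the compact unit sphere.
Taking `w` in the interior of `K` with `C ‖w‖` small, `a = x + w` and `b = x - w` work: the order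
interval `[b, a]` lies in the ball of radius `C ‖w‖` about `x`, and contains the open set
`{z | a - z, z - b ∈ interior K}` around `x`.
-/

open Metric

section Cone

variable {E : Type*} [NormedAddCommGroup E] [NormedSpace ℝ E] {K : Set E}

theorem exists_norm_le_mul_norm_of_sub_mem_of_add_mem [ProperSpace E] (hK_closed : IsClosed K)
    (hK_cone : ∀ t : ℝ, 0 ≤ t → ∀ x ∈ K, t • x ∈ K) (hK_pointed : K ∩ (-K) = {0}) :
    ∃ C > 0, ∀ e z : E, e - z ∈ K → e + z ∈ K → ‖z‖ ≤ C * ‖e‖ := by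
  have h0K : (0 : E) ∈ K := (hK_pointed.ge rfl).1
  set g : E → ℝ := fun v ↦ infDist v K + infDist v (-K)
  -- `g` vanishes only on `K ∩ -K = {0}`, so it has a positive lower bound `m` on the unit sphere.
  have hg_pos : ∀ v ∈ sphere (0 : E) 1, 0 < g v := by
    intro v hv
    by_contra! hg
    have hv₁ : v ∈ K := (hK_closed.mem_iff_infDist_zero ⟨0, h0K⟩).2 <| by
      linarith [infDist_nonneg (x := v) (s := K), infDist_nonneg (x := v) (s := -K)]
    have hv₂ : v ∈ -K := (hK_closed.neg.mem_iff_infDist_zero ⟨0, by simpa using h0K⟩).2 <| by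
      linarith [infDist_nonneg (x := v) (s := K), infDist_nonneg (x := v) (s := -K)]
    have : v = 0 := hK_pointed.le ⟨hv₁, hv₂⟩
    simp [this] at hv
  obtain ⟨m, hm, hmg⟩ := (isCompact_sphere (0 : E) 1).exists_forall_le'
    (continuous_infDist_pt K |>.add (continuous_infDist_pt (-K))).continuousOn hg_pos
  refine ⟨2 / m, by positivity, fun e z h₁ h₂ ↦ ?_⟩
  rcases eq_or_ne z 0 with rfl | hz
  · simp only [norm_zero]; positivity
  set r := ‖z‖
  have hr : 0 < r := norm_pos_iff.2 hz
  set v := r⁻¹ • z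
  have hv : v ∈ sphere (0 : E) 1 := by simp [v, r, norm_smul, hr.ne']
  have hK₁ : r⁻¹ • e + v ∈ K := by simpa [v, smul_add] using hK_cone r⁻¹ (by positivity) _ h₂
  have hK₂ : v - r⁻¹ • e ∈ -K := by
    simpa [v, smul_sub, Set.mem_neg] using hK_cone r⁻¹ (by positivity) _ h₁
  have : g v ≤ 2 * (r⁻¹ * ‖e‖) := by
    have d₁ := infDist_le_dist_of_mem (x := v) hK₁
    have d₂ := infDist_le_dist_of_mem (x := v) hK₂
    simp only [dist_eq_norm, sub_add_cancel_right, sub_sub_cancel, norm_neg, norm_smul,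
      norm_inv, Real.norm_of_nonneg hr.le] at d₁ d₂
    simp only [g]; linarith
  rw [div_mul_eq_mul_div, le_div_iff₀ hm]
  calc r * m ≤ r * (2 * (r⁻¹ * ‖e‖)) := by gcongr; exact (hmg v hv).trans this
    _ = 2 * ‖e‖ := by field_simp

open Pointwise in
theorem exists_mem_interior_norm_lt (hK_cone : ∀ t : ℝ, 0 ≤ t → ∀ x ∈ K, t • x ∈ K)
    (hK_int : (interior K).Nonempty) {ε : ℝ} (hε : 0 < ε) : ∃ w ∈ interior K, ‖w‖ < ε := by
  obtain ⟨e, he⟩ := hK_int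
  set t := ε / (‖e‖ + 1)
  have ht : 0 < t := by positivity
  refine ⟨t • e, ?_, ?_⟩
  · have : t • K ⊆ K := by rintro _ ⟨y, hy, rfl⟩; exact hK_cone t ht.le y hy
    exact interior_mono this (interior_smul₀ ht.ne' K ▸ Set.smul_mem_smul_set he)
  · calc ‖t • e‖ = ε * (‖e‖ / (‖e‖ + 1)) := by
          rw [norm_smul, Real.norm_of_nonneg ht.le]; ring
      _ < ε * 1 := by gcongr; rw [div_lt_one (by positivity)]; linarith
      _ = ε := mul_one ε

end Cone

theorem mem_interior_setOf_sub_mem_and_sub_mem {G : Type*} [TopologicalSpace G] [AddGroup G]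
    [IsTopologicalAddGroup G] {K : Set G} {a b x : G} (ha : a - x ∈ interior K)
    (hb : x - b ∈ interior K) : x ∈ interior {z | a - z ∈ K ∧ z - b ∈ K} := by
  have hopen : IsOpen {z | a - z ∈ interior K ∧ z - b ∈ interior K} :=
    (isOpen_interior.preimage (continuous_const.sub continuous_id)).inter
      (isOpen_interior.preimage (continuous_id.sub continuous_const))
  refine interior_maximal ?_ hopen ⟨ha, hb⟩
  exact fun z hz ↦ ⟨interior_subset hz.1, interior_subset hz.2⟩

theorem stmt_1_general (n : ℕ) (K : Set (EuclideanSpace ℝ (Fin n)))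
    (hK_closed : IsClosed K)
    (hK_cone : ∀ (t : ℝ), 0 ≤ t → ∀ x ∈ K, t • x ∈ K)
    (hK_pointed : K ∩ (-K) = {0})
    (hK_int : (interior K).Nonempty)
    (x : EuclideanSpace ℝ (Fin n)) (U : Set (EuclideanSpace ℝ (Fin n)))
    (hU : IsOpen U) (hxU : x ∈ U) :
    ∃ a b : EuclideanSpace ℝ (Fin n), a ∈ U ∧ b ∈ U ∧ (x - b ∈ K) ∧ (a - x ∈ K) ∧
      x ∈ interior {z | a - z ∈ K ∧ z - b ∈ K} ∧ {z | a - z ∈ K ∧ z - b ∈ K} ⊆ U := by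
  obtain ⟨C, hC, hnormal⟩ :=
    exists_norm_le_mul_norm_of_sub_mem_of_add_mem hK_closed hK_cone hK_pointed
  obtain ⟨δ, hδ, hball⟩ := isOpen_iff.1 hU x hxU
  obtain ⟨w, hw, hwδ⟩ := exists_mem_interior_norm_lt hK_cone hK_int (div_pos hδ hC)
  have hwK : w ∈ K := interior_subset hw
  have hsub : {z | x + w - z ∈ K ∧ z - (x - w) ∈ K} ⊆ U := fun z ⟨h₁, h₂⟩ ↦ hball <| by
    rw [mem_ball, dist_eq_norm]
    calc ‖z - x‖ ≤ C * ‖w‖ := hnormal w (z - x) (by convert h₁ using 1; abel)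
          (by convert h₂ using 1; abel)
      _ < δ := (lt_div_iff₀' hC).1 hwδ
  have hwidth : x + w - (x - w) ∈ K := by
    convert hK_cone 2 zero_le_two w hwK using 1; rw [two_smul]; abel
  have h0K : (0 : EuclideanSpace ℝ (Fin n)) ∈ K := (hK_pointed.ge rfl).1
  refine ⟨x + w, x - w, hsub ⟨by simpa using h0K, hwidth⟩, hsub ⟨hwidth, by simpa using h0K⟩,
    by simpa using hwK, by simpa using hwK,
    mem_interior_setOf_sub_mem_and_sub_mem (by simpa using hw) (by simpa using hw), hsub⟩

theorem stmt_1 (n : ℕ) (K : Set (EuclideanSpace ℝ (Fin n)))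
    (hK_closed : IsClosed K) (hK_convex : Convex ℝ K)
    (hK_cone : ∀ (t : ℝ), 0 ≤ t → ∀ x ∈ K, t • x ∈ K)
    (hK_pointed : K ∩ (-K) = {0})
    (hK_int : (interior K).Nonempty)
    (x : EuclideanSpace ℝ (Fin n)) (U : Set (EuclideanSpace ℝ (Fin n)))
    (hU : IsOpen U) (hxU : x ∈ U) :
    ∃ a b : EuclideanSpace ℝ (Fin n), a ∈ U ∧ b ∈ U ∧ (x - b ∈ K) ∧ (a - x ∈ K) ∧
      x ∈ interior {z | a - z ∈ K ∧ z - b ∈ K} ∧ {z | a - z ∈ K ∧ z - b ∈ K} ⊆ U :=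
  stmt_1_general n K hK_closed hK_cone hK_pointed hK_int x U hU hxU
end

section
/- Let K be a pointed closed convex cone in ℝⁿ with nonempty interior inducing partial order ⪯. For a, b, c ∈ ℝⁿ with b ⪯ a, suppose c ∉ a↓ ∩ b↑. If c ⪯ x for some x ∈ interior(a↓ ∩ b↑), then there exists y in the topological boundary of a↓ ∩ b↑ such that c ⪯ y ⪯ x. -/
theorem stmt_2 (n : ℕ) (K : Set (EuclideanSpace ℝ (Fin n)))
    (hK_closed : IsClosed K) (hK_convex : Convex ℝ K)
    (hK_cone : ∀ (t : ℝ), 0 ≤ t → ∀ x ∈ K, t • x ∈ K)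
    (hK_pointed : K ∩ (-K) = {0})
    (hK_int : (interior K).Nonempty)
    (a b c x : EuclideanSpace ℝ (Fin n))
    (hba : a - b ∈ K)
    (hc : c ∉ {z | a - z ∈ K ∧ z - b ∈ K})
    (hx : x ∈ interior {z | a - z ∈ K ∧ z - b ∈ K})
    (hcx : x - c ∈ K) :
    ∃ y ∈ frontier {z : EuclideanSpace ℝ (Fin n) | a - z ∈ K ∧ z - b ∈ K},
      y - c ∈ K ∧ x - y ∈ K := by
  set S : Set (EuclideanSpace ℝ (Fin n)) := {z | a - z ∈ K ∧ z - b ∈ K} with hS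
  have hSclosed : IsClosed S := by
    have h1 : IsClosed ((fun z => a - z) ⁻¹' K) :=
      hK_closed.preimage (by continuity)
    have h2 : IsClosed ((fun z => z - b) ⁻¹' K) :=
      hK_closed.preimage (by continuity)
    exact h1.inter h2
  -- segment from c to x meets the frontier of S
  have hseg : IsPreconnected (segment ℝ c x) := (convex_segment c x).isPreconnected
  have hkey : (segment ℝ c x ∩ frontier S).Nonempty := by
    by_contra h
    rw [Set.not_nonempty_iff_eq_empty] at h
    have hsub : segment ℝ c x ⊆ interior S ∪ (closure S)ᶜ := by
      intro z hz
      by_contra hz'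
      simp only [Set.mem_union, Set.mem_compl_iff, not_or, not_not] at hz'
      have : z ∈ segment ℝ c x ∩ frontier S := ⟨hz, hz'.2, hz'.1⟩
      rw [h] at this
      exact this
    have := hseg (interior S) (closure S)ᶜ isOpen_interior
      (isClosed_closure).isOpen_compl hsub
      ⟨x, right_mem_segment ℝ c x, hx⟩
      ⟨c, left_mem_segment ℝ c x, fun hcc => hc (hSclosed.closure_subset hcc)⟩
    obtain ⟨z, _, hz1, hz2⟩ := this
    exact hz2 (subset_closure (interior_subset hz1))
  obtain ⟨y, hyseg, hyfr⟩ := hkey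
  refine ⟨y, hyfr, ?_, ?_⟩
  · obtain ⟨u, v, hu, hv, huv, rfl⟩ := hyseg
    have hu1 : u = 1 - v := by linarith
    subst hu1
    have : (1 - v) • c + v • x - c = v • (x - c) := by module
    rw [this]
    exact hK_cone v hv _ hcx
  · obtain ⟨u, v, hu, hv, huv, rfl⟩ := hyseg
    have hv1 : v = 1 - u := by linarith
    subst hv1
    have : x - (u • c + (1 - u) • x) = u • (x - c) := by module
    rw [this]
    exact hK_cone u hu _ hcx
end

section
/- Let K be a pointed closed convex cone in ℝⁿ with nonempty interior inducing partial order ⪯. For a, b, c ∈ ℝⁿ with b ⪯ a, suppose c ∉ a↓ ∩ b↑. If x ⪯ c for some x ∈ interior(a↓ ∩ b↑), then there exists z in the topological boundary of a↓ ∩ b↑ such that x ⪯ z ⪯ c. -/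
theorem stmt_3 (n : ℕ) (K : Set (EuclideanSpace ℝ (Fin n)))
    (hK_closed : IsClosed K) (hK_convex : Convex ℝ K)
    (hK_cone : ∀ (t : ℝ), 0 ≤ t → ∀ x ∈ K, t • x ∈ K)
    (hK_pointed : K ∩ (-K) = {0})
    (hK_int : (interior K).Nonempty)
    (a b c x : EuclideanSpace ℝ (Fin n))
    (hba : a - b ∈ K)
    (hc : c ∉ {z | a - z ∈ K ∧ z - b ∈ K})
    (hx : x ∈ interior {z | a - z ∈ K ∧ z - b ∈ K})
    (hxc : c - x ∈ K) :
    ∃ z ∈ frontier {z : EuclideanSpace ℝ (Fin n) | a - z ∈ K ∧ z - b ∈ K},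
      z - x ∈ K ∧ c - z ∈ K := by
  set S : Set (EuclideanSpace ℝ (Fin n)) := {z | a - z ∈ K ∧ z - b ∈ K} with hS
  have hScl : IsClosed S := by
    have h1 : IsClosed {z : EuclideanSpace ℝ (Fin n) | a - z ∈ K} :=
      hK_closed.preimage (by continuity : Continuous fun z : EuclideanSpace ℝ (Fin n) => a - z)
    have h2 : IsClosed {z : EuclideanSpace ℝ (Fin n) | z - b ∈ K} :=
      hK_closed.preimage (by continuity : Continuous fun z : EuclideanSpace ℝ (Fin n) => z - b)
    exact h1.inter h2
  have hg : Continuous (fun t : ℝ => x + t • (c - x)) := by continuity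
  set T : Set ℝ := {t : ℝ | t ∈ Set.Icc (0:ℝ) 1 ∧ x + t • (c - x) ∈ S} with hT
  have hxS : x ∈ S := interior_subset hx
  have hT0 : (0:ℝ) ∈ T := by
    refine ⟨⟨le_refl 0, zero_le_one⟩, ?_⟩
    simp [hxS]
  have hTne : T.Nonempty := ⟨0, hT0⟩
  have hTbdd : BddAbove T := ⟨1, fun t ht => ht.1.2⟩
  have hTcl : IsClosed T := by
    have : IsClosed {t : ℝ | x + t • (c - x) ∈ S} := hScl.preimage hg
    exact (isClosed_Icc).inter this
  set t₀ : ℝ := sSup T with ht₀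
  have ht₀T : t₀ ∈ T := hTcl.csSup_mem hTne hTbdd
  have ht₀0 : 0 ≤ t₀ := ht₀T.1.1
  have ht₀1 : t₀ ≤ 1 := ht₀T.1.2
  set z : EuclideanSpace ℝ (Fin n) := x + t₀ • (c - x) with hz
  have hzS : z ∈ S := ht₀T.2
  have ht₀lt1 : t₀ < 1 := by
    rcases lt_or_eq_of_le ht₀1 with h | h
    · exact h
    · exfalso; apply hc
      have : z = c := by rw [hz, h, one_smul]; abel
      rw [← this]; exact hzS
  have hznotint : z ∉ interior S := by
    intro hzint
    have : ∀ᶠ t in nhds t₀, x + t • (c - x) ∈ interior S :=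
      hg.continuousAt.eventually_mem (isOpen_interior.mem_nhds hzint)
    rcases (this.and (eventually_lt_nhds ht₀lt1)).exists_gt with ⟨t, ht, hmem, hlt⟩
    have : t ∈ T := ⟨⟨le_trans ht₀0 ht.le, hlt.le⟩, interior_subset hmem⟩
    exact absurd (le_csSup hTbdd this) (not_le.mpr ht)
  refine ⟨z, ?_, ?_, ?_⟩
  · rw [frontier, hScl.closure_eq]; exact ⟨hzS, hznotint⟩
  · have : z - x = t₀ • (c - x) := by rw [hz]; abel
    rw [this]; exact hK_cone t₀ ht₀0 _ hxc
  · have : c - z = (1 - t₀) • (c - x) := by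
      rw [hz, sub_smul, one_smul]; abel
    rw [this]; exact hK_cone (1 - t₀) (by linarith) _ hxc
end

section
/- Let K be a pointed closed convex cone in ℝⁿ with nonempty interior inducing partial order ⪯, and let a ∈ interior(K) with a ≠ 0. For the open ball U of radius r > 0 centered at the origin, there exists t₀ ∈ (0,1) such that (t₀a)↓ ∩ (-t₀a)↑ ⊆ U. -/
/-!
Both the order interval `[-t a, t a]` and the sphere of radius `r` are cut out by closed
conditions, and at `t = 0` they are disjoint because `K` is pointed. Compactness of the sphere
keeps them disjoint for all small `t`, and since the cone makes `[-t a, t a]` homogeneous in `t`,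
a point of `[-t a, t a]` outside the ball would rescale onto the sphere inside some
`[-s a, s a]` with `0 ≤ s ≤ t`.
-/

open Metric Set Filter Topology

variable {E : Type*} [NormedAddCommGroup E] [NormedSpace ℝ E]

/-- `c↓ ∩ (-c)↑`, the order interval `[-c, c]` of the order induced by `K`. -/
def symmOrderInterval (K : Set E) (c : E) : Set E :=
  {z | c - z ∈ K ∧ z + c ∈ K}

theorem smul_mem_symmOrderInterval {K : Set E} (hK_cone : ∀ t : ℝ, 0 ≤ t → ∀ x ∈ K, t • x ∈ K)
    {c z : E} {s : ℝ} (hs : 0 ≤ s) (hz : z ∈ symmOrderInterval K c) :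
    s • z ∈ symmOrderInterval K (s • c) := by
  obtain ⟨h₁, h₂⟩ := hz
  exact ⟨smul_sub s c z ▸ hK_cone s hs _ h₁, smul_add s z c ▸ hK_cone s hs _ h₂⟩

theorem eventually_disjoint_symmOrderInterval_sphere [ProperSpace E] {K : Set E}
    (hK_closed : IsClosed K) (hK_pointed : K ∩ -K = {0}) (a : E) {r : ℝ} (hr : r ≠ 0) :
    ∀ᶠ s in 𝓝 (0 : ℝ), Disjoint (symmOrderInterval K (s • a)) (sphere 0 r) := by
  have hclosed : IsClosed {p : ℝ × E | p.2 ∈ symmOrderInterval K (p.1 • a)} :=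
    (hK_closed.preimage (by fun_prop)).inter (hK_closed.preimage (by fun_prop))
  have hnear : ∀ᶠ s in 𝓝 (0 : ℝ), ∀ u ∈ sphere (0 : E) r, u ∉ symmOrderInterval K (s • a) := by
    refine (isCompact_sphere 0 r).eventually_forall_of_forall_eventually fun u hu => ?_
    refine hclosed.isOpen_compl.mem_nhds fun ⟨hneg, hpos⟩ => ?_
    have hu0 : u ∈ K ∩ -K := ⟨by simpa using hpos, by simpa using hneg⟩
    rw [hK_pointed, mem_singleton_iff] at hu0
    exact hr (by simpa [hu0, eq_comm] using hu)
  exact hnear.mono fun s hs => disjoint_right.mpr hs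

theorem symmOrderInterval_subset_ball {K : Set E}
    (hK_cone : ∀ t : ℝ, 0 ≤ t → ∀ x ∈ K, t • x ∈ K) {a : E} {t r : ℝ} (hr : 0 < r) (ht : 0 ≤ t)
    (h : ∀ s ∈ Icc 0 t, Disjoint (symmOrderInterval K (s • a)) (sphere 0 r)) :
    symmOrderInterval K (t • a) ⊆ ball 0 r := by
  intro z hz
  rw [mem_ball_zero_iff]
  by_contra! hrz
  have hz0 : 0 < ‖z‖ := hr.trans_le hrz
  set c := r / ‖z‖
  have hc : c ∈ Icc 0 1 := ⟨by positivity, div_le_one_of_le₀ hrz hz0.le⟩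
  have hcz : c • z ∈ sphere (0 : E) r := by
    simp [c, norm_smul, abs_of_pos hr, hz0.ne']
  have hmem : c • z ∈ symmOrderInterval K ((c * t) • a) :=
    mul_smul c t a ▸ smul_mem_symmOrderInterval hK_cone hc.1 hz
  exact disjoint_left.mp (h (c * t) ⟨by positivity, mul_le_of_le_one_left ht hc.2⟩) hmem hcz

theorem stmt_4_general (n : ℕ) (K : Set (EuclideanSpace ℝ (Fin n)))
    (hK_closed : IsClosed K)
    (hK_cone : ∀ (t : ℝ), 0 ≤ t → ∀ x ∈ K, t • x ∈ K)
    (hK_pointed : K ∩ (-K) = {0})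
    (a : EuclideanSpace ℝ (Fin n))
    (r : ℝ) (hr : 0 < r) :
    ∃ t₀ : ℝ, 0 < t₀ ∧ t₀ < 1 ∧
      {z : EuclideanSpace ℝ (Fin n) | t₀ • a - z ∈ K ∧ z - (-(t₀ • a)) ∈ K} ⊆
        Metric.ball 0 r := by
  obtain ⟨δ, hδ, hsmall⟩ := Metric.eventually_nhds_iff.mp
    (eventually_disjoint_symmOrderInterval_sphere hK_closed hK_pointed a hr.ne')
  set t₀ := min (δ / 2) (1 / 2)
  have ht₀ : 0 < t₀ := by positivity
  refine ⟨t₀, ht₀, (min_le_right _ _).trans_lt (by norm_num), ?_⟩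
  have hball := symmOrderInterval_subset_ball hK_cone hr ht₀.le fun s hs => hsmall <| by
    rw [Real.dist_0_eq_abs, abs_of_nonneg hs.1]
    exact hs.2.trans_lt ((min_le_left _ _).trans_lt (half_lt_self hδ))
  simpa only [symmOrderInterval, sub_neg_eq_add] using hball

theorem stmt_4 (n : ℕ) (K : Set (EuclideanSpace ℝ (Fin n)))
    (hK_closed : IsClosed K) (hK_convex : Convex ℝ K)
    (hK_cone : ∀ (t : ℝ), 0 ≤ t → ∀ x ∈ K, t • x ∈ K)
    (hK_pointed : K ∩ (-K) = {0})
    (a : EuclideanSpace ℝ (Fin n)) (ha : a ∈ interior K) (ha0 : a ≠ 0)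
    (r : ℝ) (hr : 0 < r) :
    ∃ t₀ : ℝ, 0 < t₀ ∧ t₀ < 1 ∧
      {z : EuclideanSpace ℝ (Fin n) | t₀ • a - z ∈ K ∧ z - (-(t₀ • a)) ∈ K} ⊆
        Metric.ball 0 r :=
  stmt_4_general n K hK_closed hK_cone hK_pointed a r hr
end

section
/- Let X = {(u,v) ∈ ℝ² : uv > 0} ∪ {(0,0)} with the Euclidean subspace topology and coordinatewise partial order ≤. Then for the point θ = (0,0) and for any a, b ∈ X with b ≤ θ ≤ a, b ≠ θ ≠ a, and θ ∈ interior(b↑ ∩ a↓) (interior taken in X), the set (b↑ ∩ a↓) ∖ interior(a↓) is not compact. -/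
def X6 : Set (ℝ × ℝ) := {p | p.1 * p.2 > 0} ∪ {(0, 0)}

/-! The points `(a₁, t)` with `0 < t ≤ a₂` lie in `(b↑ ∩ a↓) ∖ interior(a↓)`: near them `X` is an
open subset of the plane, so `a↓` cannot be a neighbourhood of a point on its right edge. As
`t → 0⁺` they converge in `ℝ²` to `(a₁, 0)`, which is missing from `X` because `a₁ ≠ 0`; hence the
image of the set in `ℝ²` is not closed, so the set is not compact. -/

open Set Filter Topology

lemma mem_X6_of_pos {p : ℝ × ℝ} (h₁ : 0 < p.1) (h₂ : 0 < p.2) : p ∈ X6 :=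
  Or.inl (mul_pos h₁ h₂)

lemma X6_mem_nhds_of_pos {p : ℝ × ℝ} (h₁ : 0 < p.1) (h₂ : 0 < p.2) : X6 ∈ 𝓝 p := by
  have hU : IsOpen {q : ℝ × ℝ | 0 < q.1 ∧ 0 < q.2} :=
    (isOpen_lt continuous_const continuous_fst).inter (isOpen_lt continuous_const continuous_snd)
  exact mem_of_superset (hU.mem_nhds ⟨h₁, h₂⟩) fun q hq => mem_X6_of_pos hq.1 hq.2

lemma mk_zero_notMem_X6 {u : ℝ} (hu : u ≠ 0) : (u, (0 : ℝ)) ∉ X6 := by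
  rintro (h | h)
  · simp at h
  · exact hu (Prod.ext_iff.mp h).1

lemma pos_of_mem_X6_of_nonneg {p : ℝ × ℝ} (hp : p ∈ X6) (hp0 : p ≠ (0, 0)) (h : (0, 0) ≤ p) :
    0 < p.1 ∧ 0 < p.2 := by
  obtain ⟨h₁, h₂⟩ := h
  rcases hp with hp | hp
  · have hp : 0 < p.1 * p.2 := hp
    exact ⟨h₁.lt_of_ne fun h => by simp [← h] at hp, h₂.lt_of_ne fun h => by simp [← h] at hp⟩
  · exact absurd hp hp0

lemma fst_lt_of_Iic_mem_nhds {α β : Type*} [TopologicalSpace α] [LinearOrder α] [OrderTopology α]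
    [DenselyOrdered α] [NoMaxOrder α] [TopologicalSpace β] [Preorder β] {c p : α × β}
    (h : Iic c ∈ 𝓝 p) : p.1 < c.1 := by
  have hp := mem_interior_iff_mem_nhds.mpr h
  rw [Iic_prod_eq, interior_prod_eq] at hp
  simpa only [interior_Iic, mem_Iio] using hp.1

lemma notMem_interior_Iic_X6 {x : X6} {c : ℝ × ℝ} (h₁ : 0 < x.val.1) (h₂ : 0 < x.val.2)
    (hc : c.1 ≤ x.val.1) : x ∉ interior {y : X6 | y.val ≤ c} := by
  intro hx
  have hsub : Subtype.val '' {y : X6 | y.val ≤ c} ∈ 𝓝[X6] x.val :=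
    mem_nhds_subtype_iff_nhdsWithin.mp (mem_interior_iff_mem_nhds.mp hx)
  rw [nhdsWithin_eq_nhds.mpr (X6_mem_nhds_of_pos h₁ h₂)] at hsub
  have hIic : Iic c ∈ 𝓝 x.val := mem_of_superset hsub (by rintro _ ⟨y, hy, rfl⟩; exact hy)
  exact (fst_lt_of_Iic_mem_nhds hIic).not_ge hc

theorem stmt_6_general (θ a b : ↥X6)
    (hθ : θ.val = (0, 0))
    (hba : b.val ≤ θ.val) (hθa : θ.val ≤ a.val)
    (haθ : a ≠ θ) :
    ¬ IsCompact (({x : ↥X6 | b.val ≤ x.val} ∩ {x : ↥X6 | x.val ≤ a.val}) \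
      interior {x : ↥X6 | x.val ≤ a.val}) := by
  set K := ({x : ↥X6 | b.val ≤ x.val} ∩ {x : ↥X6 | x.val ≤ a.val}) \
    interior {x : ↥X6 | x.val ≤ a.val}
  rw [hθ] at hba hθa
  obtain ⟨ha₁, ha₂⟩ := pos_of_mem_X6_of_nonneg a.2 (fun h => haθ (Subtype.ext (h.trans hθ.symm))) hθa
  have hedge : ∀ t ∈ Ioc 0 a.val.2, (a.val.1, t) ∈ Subtype.val '' K := by
    rintro t ⟨ht₀, hta⟩
    refine ⟨⟨(a.val.1, t), mem_X6_of_pos ha₁ ht₀⟩, ⟨⟨?_, le_rfl, hta⟩, ?_⟩, rfl⟩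
    · exact hba.trans ⟨ha₁.le, ht₀.le⟩
    · exact notMem_interior_Iic_X6 ha₁ ht₀ le_rfl
  have hlim : Tendsto (fun t : ℝ => (a.val.1, t)) (𝓝[>] 0) (𝓝 (a.val.1, 0)) :=
    (continuous_const.prodMk continuous_id).continuousAt.tendsto.mono_left nhdsWithin_le_nhds
  have hedge_near : ∀ᶠ t in 𝓝[>] (0 : ℝ), (a.val.1, t) ∈ Subtype.val '' K :=
    Filter.mem_of_superset (Ioc_mem_nhdsGT ha₂) hedge
  intro hK
  have hmem := (hK.image continuous_subtype_val).isClosed.mem_of_tendsto hlim hedge_near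
  exact mk_zero_notMem_X6 ha₁.ne' (Subtype.coe_image_subset X6 K hmem)

theorem stmt_6 (θ a b : ↥X6)
    (hθ : θ.val = (0, 0))
    (hba : b.val ≤ θ.val) (hθa : θ.val ≤ a.val)
    (hbθ : b ≠ θ) (haθ : a ≠ θ)
    (hint : θ ∈ interior ({x : ↥X6 | b.val ≤ x.val} ∩ {x : ↥X6 | x.val ≤ a.val})) :
    ¬ IsCompact (({x : ↥X6 | b.val ≤ x.val} ∩ {x : ↥X6 | x.val ≤ a.val}) \
      interior {x : ↥X6 | x.val ≤ a.val}) :=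
  stmt_6_general θ a b hθ hba hθa haθ
end

section
/- Let Y = T₁ ∪ T₂ ⊆ ℝ³, where T₁ is the closed triangle with vertices (0,0,0), (0,-1,0), (-1,-1,0) and T₂ is the closed triangle with vertices (0,0,0), (-1,-1,0), (-1,-1,-1), equipped with coordinatewise partial order ≤. Then (Y, ≤) is a lattice: every two elements of Y have a least upper bound and a greatest lower bound in Y. -/
lemma combo_mem (p q r : ℝ × ℝ × ℝ) (a b c : ℝ) (ha : 0 ≤ a) (hb : 0 ≤ b) (hc : 0 ≤ c)
    (habc : a + b + c = 1) : a • p + b • q + c • r ∈ convexHull ℝ {p, q, r} := by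
  have h := (convex_convexHull ℝ ({p, q, r} : Set (ℝ × ℝ × ℝ))).sum_mem
    (t := (Finset.univ : Finset (Fin 3))) (w := ![a, b, c]) (z := ![p, q, r])
    (by intro i _; fin_cases i <;> simpa)
    (by simp [Fin.sum_univ_three, habc])
    (by intro i _; fin_cases i <;>
        · apply subset_convexHull ℝ ({p,q,r} : Set _); simp)
  simpa [Fin.sum_univ_three] using h

def T₁ : Set (ℝ × ℝ × ℝ) :=
  convexHull ℝ {((0:ℝ), (0:ℝ), (0:ℝ)), (0, -1, 0), (-1, -1, 0)}

def T₂ : Set (ℝ × ℝ × ℝ) :=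
  convexHull ℝ {((0:ℝ), (0:ℝ), (0:ℝ)), (-1, -1, 0), (-1, -1, -1)}

def Y : Set (ℝ × ℝ × ℝ) := T₁ ∪ T₂

lemma mem_T₁ (p : ℝ × ℝ × ℝ) :
    p ∈ T₁ ↔ -1 ≤ p.2.1 ∧ p.2.1 ≤ p.1 ∧ p.1 ≤ 0 ∧ p.2.2 = 0 := by
  constructor
  · intro hp
    have hsub : T₁ ⊆ {q : ℝ × ℝ × ℝ | -1 ≤ q.2.1 ∧ q.2.1 ≤ q.1 ∧ q.1 ≤ 0 ∧ q.2.2 = 0} := by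
      apply convexHull_min
      · rintro q (rfl | rfl | rfl) <;> norm_num
      · intro u hu v hv a b ha hb hab
        simp only [Set.mem_setOf_eq, Prod.fst_add, Prod.snd_add, Prod.smul_fst, Prod.smul_snd,
          smul_eq_mul] at *
        obtain ⟨h1, h2, h3, h4⟩ := hu
        obtain ⟨k1, k2, k3, k4⟩ := hv
        refine ⟨by nlinarith, by nlinarith, by nlinarith, by rw [h4, k4]; ring⟩
    exact hsub hp
  · rintro ⟨h1, h2, h3, h4⟩
    have : p = (1 + p.2.1) • ((0:ℝ), (0:ℝ), (0:ℝ)) + (p.1 - p.2.1) • ((0:ℝ), (-1:ℝ), (0:ℝ))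
        + (-p.1) • ((-1:ℝ), (-1:ℝ), (0:ℝ)) := by
      obtain ⟨u, v, w⟩ := p
      simp only [Prod.smul_mk, smul_eq_mul, Prod.mk_add_mk] at *
      subst h4
      norm_num
    rw [this]
    exact combo_mem _ _ _ _ _ _ (by linarith) (by linarith) (by linarith) (by ring)

lemma mem_T₂ (p : ℝ × ℝ × ℝ) :
    p ∈ T₂ ↔ -1 ≤ p.1 ∧ p.1 = p.2.1 ∧ p.1 ≤ p.2.2 ∧ p.2.2 ≤ 0 := by
  constructor
  · intro hp
    have hsub : T₂ ⊆ {q : ℝ × ℝ × ℝ | -1 ≤ q.1 ∧ q.1 = q.2.1 ∧ q.1 ≤ q.2.2 ∧ q.2.2 ≤ 0} := by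
      apply convexHull_min
      · rintro q (rfl | rfl | rfl) <;> norm_num
      · intro u hu v hv a b ha hb hab
        simp only [Set.mem_setOf_eq, Prod.fst_add, Prod.snd_add, Prod.smul_fst, Prod.smul_snd,
          smul_eq_mul] at *
        obtain ⟨h1, h2, h3, h4⟩ := hu
        obtain ⟨k1, k2, k3, k4⟩ := hv
        refine ⟨by nlinarith, by rw [h2, k2], by nlinarith, by nlinarith⟩
    exact hsub hp
  · rintro ⟨h1, h2, h3, h4⟩
    have : p = (1 + p.1) • ((0:ℝ), (0:ℝ), (0:ℝ)) + (p.2.2 - p.1) • ((-1:ℝ), (-1:ℝ), (0:ℝ))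
        + (-p.2.2) • ((-1:ℝ), (-1:ℝ), (-1:ℝ)) := by
      obtain ⟨u, v, w⟩ := p
      simp only [Prod.smul_mk, smul_eq_mul, Prod.mk_add_mk] at *
      subst h2
      norm_num
    rw [this]
    exact combo_mem _ _ _ _ _ _ (by linarith) (by linarith) (by linarith) (by ring)

lemma mem_Y (p : ℝ × ℝ × ℝ) :
    p ∈ Y ↔ -1 ≤ p.2.1 ∧ p.2.1 ≤ p.1 ∧ p.1 ≤ p.2.2 ∧ p.2.2 ≤ 0 ∧ (p.2.2 = 0 ∨ p.1 = p.2.1) := by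
  rw [Y, Set.mem_union, mem_T₁, mem_T₂]
  constructor
  · rintro (⟨h1, h2, h3, h4⟩ | ⟨h1, h2, h3, h4⟩)
    · exact ⟨h1, h2, by rw [h4]; exact h3, by rw [h4], Or.inl h4⟩
    · exact ⟨by rw [← h2]; exact h1, le_of_eq h2.symm, h3, h4, Or.inr h2⟩
  · rintro ⟨h1, h2, h3, h4, (h5 | h5)⟩
    · exact Or.inl ⟨h1, h2, by rw [← h5]; exact h3, h5⟩
    · exact Or.inr ⟨by rw [h5]; exact h1, h5, h3, h4⟩

lemma le_iff (p q : ℝ × ℝ × ℝ) : p ≤ q ↔ p.1 ≤ q.1 ∧ p.2.1 ≤ q.2.1 ∧ p.2.2 ≤ q.2.2 := by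
  simp [Prod.le_def]

theorem stmt_7 (x y : ℝ × ℝ × ℝ) (hx : x ∈ Y) (hy : y ∈ Y) :
    (∃ s ∈ Y, x ≤ s ∧ y ≤ s ∧ ∀ z ∈ Y, x ≤ z → y ≤ z → s ≤ z) ∧
    (∃ m ∈ Y, m ≤ x ∧ m ≤ y ∧ ∀ z ∈ Y, z ≤ x → z ≤ y → z ≤ m) := by
  rw [mem_Y] at hx hy
  obtain ⟨x1, x2, x3, x4, x5⟩ := hx
  obtain ⟨y1, y2, y3, y4, y5⟩ := hy
  constructor
  · refine ⟨(max x.1 y.1, max x.2.1 y.2.1, max x.2.2 y.2.2), ?_, ?_, ?_, ?_⟩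
    · rw [mem_Y]
      refine ⟨le_max_of_le_left x1, max_le_max x2 y2, max_le_max x3 y3, max_le x4 y4, ?_⟩
      rcases x5 with h | h
      · exact Or.inl (by rw [h]; exact max_eq_left y4)
      rcases y5 with h' | h'
      · exact Or.inl (by rw [h']; exact max_eq_right x4)
      · exact Or.inr (by rw [h, h'])
    · exact (le_iff _ _).2 ⟨le_max_left _ _, le_max_left _ _, le_max_left _ _⟩
    · exact (le_iff _ _).2 ⟨le_max_right _ _, le_max_right _ _, le_max_right _ _⟩
    · intro z _ hxz hyz
      rw [le_iff] at hxz hyz ⊢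
      exact ⟨max_le hxz.1 hyz.1, max_le hxz.2.1 hyz.2.1, max_le hxz.2.2 hyz.2.2⟩
  · by_cases h0 : x.2.2 = 0 ∧ y.2.2 = 0
    · refine ⟨(min x.1 y.1, min x.2.1 y.2.1, 0), ?_, ?_, ?_, ?_⟩
      · rw [mem_Y]
        refine ⟨le_min x1 y1, min_le_min x2 y2, ?_, le_refl 0, Or.inl rfl⟩
        exact (min_le_left _ _).trans (by rw [← h0.1]; exact x3)
      · exact (le_iff _ _).2 ⟨min_le_left _ _, min_le_left _ _, le_of_eq h0.1.symm⟩
      · exact (le_iff _ _).2 ⟨min_le_right _ _, min_le_right _ _, le_of_eq h0.2.symm⟩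
      · intro z hz hzx hzy
        rw [mem_Y] at hz
        rw [le_iff] at hzx hzy ⊢
        exact ⟨le_min hzx.1 hzy.1, le_min hzx.2.1 hzy.2.1, hz.2.2.2.1⟩
    · refine ⟨(min x.2.1 y.2.1, min x.2.1 y.2.1, min x.2.2 y.2.2), ?_, ?_, ?_, ?_⟩
      · rw [mem_Y]
        exact ⟨le_min x1 y1, le_rfl, min_le_min (x2.trans x3) (y2.trans y3),
          (min_le_left _ _).trans x4, Or.inr rfl⟩
      · exact (le_iff _ _).2 ⟨(min_le_left _ _).trans x2, min_le_left _ _, min_le_left _ _⟩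
      · exact (le_iff _ _).2 ⟨(min_le_right _ _).trans y2, min_le_right _ _, min_le_right _ _⟩
      · intro z hz hzx hzy
        rw [mem_Y] at hz
        rw [le_iff] at hzx hzy ⊢
        have hmin : min x.2.2 y.2.2 < 0 := by
          rcases not_and_or.1 h0 with h | h
          · exact (min_le_left _ _).trans_lt (lt_of_le_of_ne x4 h)
          · exact (min_le_right _ _).trans_lt (lt_of_le_of_ne y4 h)
        have hz5 : z.1 = z.2.1 := by
          rcases hz.2.2.2.2 with h | h
          · exact absurd (h ▸ (le_min hzx.2.2 hzy.2.2)) (not_le.2 hmin)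
          · exact h
        exact ⟨hz5 ▸ le_min hzx.2.1 hzy.2.1, le_min hzx.2.1 hzy.2.1, le_min hzx.2.2 hzy.2.2⟩
end

section
/- Let Y = T₁ ∪ T₂ ⊆ ℝ³ with T₁ the closed triangle with vertices (0,0,0), (0,-1,0), (-1,-1,0) and T₂ the closed triangle with vertices (0,0,0), (-1,-1,0), (-1,-1,-1), with the subspace Euclidean topology and coordinatewise order. The meet operation ∧ : Y × Y → Y is not continuous at the point ((0,0,0), (0,-1,0)). -/
open Filter Topology

lemma T₁_subset_thd_eq_zero : T₁ ⊆ {p : ℝ × ℝ × ℝ | p.2.2 = 0} := by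
  refine convexHull_min ?_ ?_
  · rintro p (rfl | rfl | rfl | _) <;> simp_all
  · intro x hx y hy a b _ _ _
    simp_all

lemma T₂_subset_fst_eq_snd : T₂ ⊆ {p : ℝ × ℝ × ℝ | p.1 = p.2.1} := by
  refine convexHull_min ?_ ?_
  · rintro p (rfl | rfl | rfl | _) <;> simp_all
  · intro x hx y hy a b _ _ _
    simp_all

lemma neg_diag_mem_Y {t : ℝ} (h0 : 0 ≤ t) (h1 : t ≤ 1) : ((-t, -t, -t) : ℝ × ℝ × ℝ) ∈ Y := by
  have hseg : ((-t, -t, -t) : ℝ × ℝ × ℝ) ∈ segment ℝ ((0:ℝ), (0:ℝ), (0:ℝ)) (-1, -1, -1) :=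
    ⟨1 - t, t, by linarith, h0, by ring, by simp⟩
  exact Or.inr (segment_subset_convexHull (by simp) (by simp) hseg)

lemma fst_le_neg_one_of_mem_Y {z : ℝ × ℝ × ℝ} (hz : z ∈ Y) (hthd : z.2.2 < 0) (hsnd : z.2.1 ≤ -1) :
    z.1 ≤ -1 := by
  rcases hz with hz | hz
  · exact absurd (T₁_subset_thd_eq_zero hz) hthd.ne
  · exact (T₂_subset_fst_eq_snd hz).trans_le hsnd

noncomputable def negDiagSeq (n : ℕ) : Y :=
  ⟨(-(1 / (n + 1)), -(1 / (n + 1)), -(1 / (n + 1))),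
    neg_diag_mem_Y Nat.one_div_pos_of_nat.le
      (by simpa using Nat.one_div_le_one_div (α := ℝ) (Nat.zero_le n))⟩

lemma tendsto_negDiagSeq :
    Tendsto (fun n => (negDiagSeq n : ℝ × ℝ × ℝ)) atTop (𝓝 ((0:ℝ), (0:ℝ), (0:ℝ))) := by
  have h := (tendsto_one_div_add_atTop_nhds_zero_nat (𝕜 := ℝ)).neg
  rw [neg_zero] at h
  exact h.prodMk_nhds (h.prodMk_nhds h) |>.congr fun _ => rfl

theorem stmt_8 (m : ↥Y → ↥Y → ↥Y)
    (hm : ∀ x y : ↥Y, (m x y).val ≤ x.val ∧ (m x y).val ≤ y.val ∧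
      ∀ z : ↥Y, z.val ≤ x.val → z.val ≤ y.val → z.val ≤ (m x y).val) :
    ¬ ContinuousAt (fun p : ↥Y × ↥Y => m p.1 p.2)
      (⟨((0:ℝ), (0:ℝ), (0:ℝ)), Or.inl (subset_convexHull ℝ _ (by simp))⟩,
       ⟨((0:ℝ), (-1:ℝ), (0:ℝ)), Or.inl (subset_convexHull ℝ _ (by simp))⟩) := by
  set P₁ : Y := ⟨((0:ℝ), (0:ℝ), (0:ℝ)), Or.inl (subset_convexHull ℝ _ (by simp))⟩
  set P₂ : Y := ⟨((0:ℝ), (-1:ℝ), (0:ℝ)), Or.inl (subset_convexHull ℝ _ (by simp))⟩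
  intro hc
  have hbase : 0 ≤ (m P₁ P₂).val.1 :=
    ((hm P₁ P₂).2.2 P₂ (by simp [P₁, P₂, Prod.le_def]) le_rfl).1
  have hseq : Tendsto (fun n => m (negDiagSeq n) P₂) atTop (𝓝 (m P₁ P₂)) :=
    hc.tendsto.comp ((tendsto_subtype_rng.2 tendsto_negDiagSeq).prodMk_nhds tendsto_const_nhds)
  have hfar : ∀ n, (m (negDiagSeq n) P₂).val.1 ≤ -1 := fun n =>
    fst_le_neg_one_of_mem_Y (m _ _).2
      ((hm _ _).1.2.2.trans_lt (neg_neg_of_pos (Nat.one_div_pos_of_nat (n := n)))) (hm _ _).2.1.2.1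
  have hclosed : IsClosed {v : Y | v.val.1 ≤ -1} :=
    isClosed_le (continuous_fst.comp continuous_subtype_val) continuous_const
  have hlim : (m P₁ P₂).val.1 ≤ -1 := hclosed.mem_of_tendsto hseq (Eventually.of_forall hfar)
  linarith
end

section
/- Let Y = T₁ ∪ T₂ ⊆ ℝ³ as above (T₁ with vertices (0,0,0),(0,-1,0),(-1,-1,0); T₂ with vertices (0,0,0),(-1,-1,0),(-1,-1,-1)). For any nonempty set O relatively open in Y with O ⊆ T₁ ∖ T₂, and for any y = (u,v,w) ∈ T₂ with w < 0, one has y↓ ∩ O = ∅, where y↓ = {z ∈ Y : z ≤ y} with coordinatewise order. -/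
lemma T1_third (z : ℝ × ℝ × ℝ) (hz : z ∈ T₁) : z.2.2 = 0 := by
  have hsub : T₁ ⊆ {p : ℝ × ℝ × ℝ | p.2.2 = 0} := by
    apply convexHull_min
    · intro p hp
      simp only [Set.mem_insert_iff, Set.mem_singleton_iff] at hp
      rcases hp with h | h | h <;> simp [h]
    · intro x hx y hy a b _ _ hab
      simp only [Set.mem_setOf_eq] at *
      show a * x.2.2 + b * y.2.2 = 0
      rw [hx, hy]; ring
  exact hsub hz

theorem stmt_9 (O : Set (ℝ × ℝ × ℝ))
    (hO_open : ∃ V : Set (ℝ × ℝ × ℝ), IsOpen V ∧ O = V ∩ Y)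
    (hO_ne : O.Nonempty) (hO_sub : O ⊆ T₁ \ T₂)
    (y : ℝ × ℝ × ℝ) (hy : y ∈ T₂) (hw : y.2.2 < 0) :
    {z | z ∈ Y ∧ z ≤ y} ∩ O = ∅ := by
  ext z
  simp only [Set.mem_inter_iff, Set.mem_setOf_eq, Set.mem_empty_iff_false, iff_false, not_and]
  rintro ⟨_, hzy⟩ hzO
  have hz1 : z ∈ T₁ := (hO_sub hzO).1
  have h0 : z.2.2 = 0 := T1_third z hz1
  have : z.2.2 ≤ y.2.2 := hzy.2.2
  linarith
end

section
/- Let X = (0,1) × (0,1) ⊆ ℝ² with the Euclidean subspace topology and coordinatewise order. For (u₀,v₀) ∈ X, let ℓ be the open segment from (0,v₀) to (u₀,1) (endpoints excluded). Then ℓ ∩ X is closed in X and ℓ ∩ (u₀,v₀)↓ = ∅, while for every v with v₀ < v < 1, ℓ ∩ (u₀,v)↓ ≠ ∅, where x↓ = {z ∈ X : z ≤ x} with coordinatewise order. -/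
def X12 : Set (ℝ × ℝ) := Set.Ioo (0:ℝ) 1 ×ˢ Set.Ioo (0:ℝ) 1

theorem stmt_12 (u₀ v₀ : ℝ) (h : (u₀, v₀) ∈ X12)
    (ℓ : Set (ℝ × ℝ))
    (hℓ : ℓ = {q | ∃ t : ℝ, 0 < t ∧ t < 1 ∧
      q = t • ((u₀, 1) : ℝ × ℝ) + (1 - t) • ((0, v₀) : ℝ × ℝ)}) :
    (∃ F : Set (ℝ × ℝ), IsClosed F ∧ ℓ ∩ X12 = F ∩ X12) ∧
    ℓ ∩ {z | z ∈ X12 ∧ z ≤ (u₀, v₀)} = ∅ ∧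
    ∀ v : ℝ, v₀ < v → v < 1 → (ℓ ∩ {z | z ∈ X12 ∧ z ≤ (u₀, v)}).Nonempty := by
  simp only [X12, Set.mem_prod, Set.mem_Ioo] at h
  obtain ⟨⟨hu0, hu1⟩, hv0, hv1⟩ := h
  have heq : ∀ t : ℝ, t • ((u₀, 1) : ℝ × ℝ) + (1 - t) • ((0, v₀) : ℝ × ℝ)
      = ((t * u₀, t + (1 - t) * v₀) : ℝ × ℝ) := by
    intro t; simp [Prod.ext_iff]
  refine ⟨?_, ?_, ?_⟩
  · refine ⟨(fun t : ℝ => t • ((u₀, 1) : ℝ × ℝ) + (1 - t) • ((0, v₀) : ℝ × ℝ)) ''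
      Set.Icc 0 1, ?_, ?_⟩
    · exact (isCompact_Icc.image (by fun_prop)).isClosed
    · ext q
      simp only [hℓ, Set.mem_inter_iff, Set.mem_setOf_eq, Set.mem_image, Set.mem_Icc]
      constructor
      · rintro ⟨⟨t, ht0, ht1, rfl⟩, hq⟩
        exact ⟨⟨t, ⟨ht0.le, ht1.le⟩, rfl⟩, hq⟩
      · rintro ⟨⟨t, ⟨ht0, ht1⟩, rfl⟩, hq⟩
        rw [heq] at hq
        simp only [X12, Set.mem_prod, Set.mem_Ioo] at hq
        obtain ⟨⟨hx0, hx1⟩, hy0, hy1⟩ := hq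
        refine ⟨⟨t, ?_, ?_, rfl⟩, ?_⟩
        · rcases ht0.lt_or_eq with h' | h'
          · exact h'
          · exfalso; rw [← h'] at hx0; simp at hx0
        · rcases ht1.lt_or_eq with h' | h'
          · exact h'
          · exfalso; rw [h'] at hy1; simp at hy1
        · rw [heq]
          simp only [X12, Set.mem_prod, Set.mem_Ioo]
          exact ⟨⟨hx0, hx1⟩, hy0, hy1⟩
  · ext q
    simp only [hℓ, Set.mem_inter_iff, Set.mem_setOf_eq, Set.mem_empty_iff_false, iff_false]
    rintro ⟨⟨t, ht0, ht1, rfl⟩, _, hle⟩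
    rw [heq] at hle
    have h2 : t + (1 - t) * v₀ ≤ v₀ := hle.2
    nlinarith
  · intro v hv hv1'
    set t := (v - v₀) / (1 - v₀) with htdef
    have h1v : (0:ℝ) < 1 - v₀ := by linarith
    have ht0 : 0 < t := div_pos (by linarith) h1v
    have ht1 : t < 1 := by rw [div_lt_one h1v]; linarith
    refine ⟨t • ((u₀, 1) : ℝ × ℝ) + (1 - t) • ((0, v₀) : ℝ × ℝ), ?_, ?_⟩
    · rw [hℓ]; exact ⟨t, ht0, ht1, rfl⟩
    · have hyv : t + (1 - t) * v₀ = v := by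
        field_simp [htdef]
        have h3 : t * (1 - v₀) = v - v₀ := by rw [htdef]; exact div_mul_cancel₀ _ h1v.ne'
        linarith
      rw [heq]
      simp only [Set.mem_setOf_eq, X12, Set.mem_prod, Set.mem_Ioo]
      refine ⟨⟨⟨mul_pos ht0 hu0, ?_⟩, ?_, ?_⟩, ?_, ?_⟩
      · nlinarith
      · rw [hyv]; linarith
      · rw [hyv]; exact hv1'
      · show t * u₀ ≤ u₀; nlinarith
      · show t + (1 - t) * v₀ ≤ v; rw [hyv]
end

section
/- Let X = {(u,v,w) ∈ ℝ³ : u ≤ 0, v ≤ 0, w ≤ 0, uv + w - 1 ≤ 0}. With the coordinatewise order, X is a meet-semilattice: for x = (u₁,v₁,w₁), y = (u₂,v₂,w₂) ∈ X, the greatest lower bound x ∧ y in X exists and equals (min u, min v, min w) if (min u)(min v) + min w - 1 ≤ 0, and equals (min u, min v, 1 - (min u)(min v)) otherwise, where min u = min(u₁,u₂) etc. -/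
def X13 : Set (ℝ × ℝ × ℝ) :=
  {p | p.1 ≤ 0 ∧ p.2.1 ≤ 0 ∧ p.2.2 ≤ 0 ∧ p.1 * p.2.1 + p.2.2 - 1 ≤ 0}

open Classical in
noncomputable def meet13 (x y : ℝ × ℝ × ℝ) : ℝ × ℝ × ℝ :=
  if min x.1 y.1 * min x.2.1 y.2.1 + min x.2.2 y.2.2 - 1 ≤ 0 then
    (min x.1 y.1, min x.2.1 y.2.1, min x.2.2 y.2.2)
  else
    (min x.1 y.1, min x.2.1 y.2.1, 1 - min x.1 y.1 * min x.2.1 y.2.1)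

theorem stmt_13 (x y : ℝ × ℝ × ℝ) (hx : x ∈ X13) (hy : y ∈ X13) :
    meet13 x y ∈ X13 ∧ meet13 x y ≤ x ∧ meet13 x y ≤ y ∧
      ∀ z ∈ X13, z ≤ x → z ≤ y → z ≤ meet13 x y := by
  obtain ⟨hx1, hx2, hx3, hx4⟩ := hx
  obtain ⟨hy1, hy2, hy3, hy4⟩ := hy
  set a := min x.1 y.1 with ha
  set b := min x.2.1 y.2.1 with hb
  set m := min x.2.2 y.2.2 with hm
  have ha1 : a ≤ x.1 := min_le_left _ _
  have ha2 : a ≤ y.1 := min_le_right _ _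
  have hb1 : b ≤ x.2.1 := min_le_left _ _
  have hb2 : b ≤ y.2.1 := min_le_right _ _
  have hm1 : m ≤ x.2.2 := min_le_left _ _
  have hm2 : m ≤ y.2.2 := min_le_right _ _
  have ha0 : a ≤ 0 := ha1.trans hx1
  have hb0 : b ≤ 0 := hb1.trans hx2
  have hm0 : m ≤ 0 := hm1.trans hx3
  unfold meet13
  split_ifs with h
  · refine ⟨⟨ha0, hb0, hm0, h⟩, ⟨ha1, hb1, hm1⟩, ⟨ha2, hb2, hm2⟩, ?_⟩
    rintro z ⟨hz1, hz2, hz3, hz4⟩ ⟨hzx1, hzx2, hzx3⟩ ⟨hzy1, hzy2, hzy3⟩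
    exact ⟨le_min hzx1 hzy1, le_min hzx2 hzy2, le_min hzx3 hzy3⟩
  · push_neg at h
    have hab : (1:ℝ) ≤ a * b := by nlinarith
    refine ⟨⟨ha0, hb0, by dsimp only; nlinarith [hab], by dsimp only; nlinarith [hab]⟩,
      ⟨ha1, hb1, by dsimp only; nlinarith [hab]⟩, ⟨ha2, hb2, by dsimp only; nlinarith [hab]⟩, ?_⟩
    rintro z ⟨hz1, hz2, hz3, hz4⟩ ⟨hzx1, hzx2, hzx3⟩ ⟨hzy1, hzy2, hzy3⟩
    have hza : z.1 ≤ a := le_min hzx1 hzy1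
    have hzb : z.2.1 ≤ b := le_min hzx2 hzy2
    have : a * b ≤ z.1 * z.2.1 := by nlinarith
    exact ⟨hza, hzb, by dsimp only; nlinarith [hab]⟩
end

section
/- Let X = {(u,v,w) ∈ ℝ³ : u ≤ 0, v ≤ 0, w ≤ 0, uv + w - 1 ≤ 0} with coordinatewise order. The meet operation ∧ : X × X → X (given by (x,y) ↦ (min u, min v, min w) if this lies in X, else (min u, min v, 1 - (min u)(min v))) is continuous with respect to the Euclidean subspace topology. -/
theorem stmt_14 :
    ContinuousOn (fun p : (ℝ × ℝ × ℝ) × (ℝ × ℝ × ℝ) => meet13 p.1 p.2)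
      (X13 ×ˢ X13) := by
  have heq : (fun p : (ℝ × ℝ × ℝ) × (ℝ × ℝ × ℝ) => meet13 p.1 p.2) =
      fun p => (min p.1.1 p.2.1, min p.1.2.1 p.2.2.1,
        min (min p.1.2.2 p.2.2.2) (1 - min p.1.1 p.2.1 * min p.1.2.1 p.2.2.1)) := by
    funext p
    unfold meet13
    split_ifs with h
    · simp only [Prod.mk.injEq, true_and]
      exact (min_eq_left (by linarith)).symm
    · simp only [Prod.mk.injEq, true_and]
      exact (min_eq_right (by linarith)).symm
  rw [heq]
  apply Continuous.continuousOn
  fun_prop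
end

section
/- Let X = {(u,v,w) ∈ ℝ³ : u ≤ 0, v ≤ 0, w ≤ 0, uv + w - 1 ≤ 0} with coordinatewise order and Euclidean topology. Then X is order-connected: for any x, y ∈ X with x ≤ y, the order interval x↑ ∩ y↓ = {z ∈ X : x ≤ z ≤ y} is a connected subset of X. -/
set_option maxHeartbeats 1000000


theorem stmt_15 (x y : ℝ × ℝ × ℝ) (hx : x ∈ X13) (hy : y ∈ X13) (hxy : x ≤ y) :
    IsConnected {z | z ∈ X13 ∧ x ≤ z ∧ z ≤ y} := by
  set S : Set (ℝ × ℝ × ℝ) := {z | z ∈ X13 ∧ x ≤ z ∧ z ≤ y} with hS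
  have hyS : y ∈ S := ⟨hy, hxy, le_refl y⟩
  have key : ∀ a b : ℝ × ℝ × ℝ, segment ℝ a b ⊆ S → JoinedIn S a b := by
    intro a b h
    have hpc : IsPathConnected (segment ℝ a b) :=
      (convex_segment a b).isPathConnected ⟨a, left_mem_segment ℝ a b⟩
    exact (hpc.joinedIn a (left_mem_segment ℝ a b) b (right_mem_segment ℝ a b)).mono h
  obtain ⟨hx1, hx2, hx3, hx4⟩ := hx
  obtain ⟨hy1, hy2, hy3, hy4⟩ := hy
  have hxy' := hxy
  rw [Prod.le_def, Prod.le_def] at hxy'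
  have hxy1 := hxy'.1
  have hxy2 := hxy'.2.1
  have hxy3 := hxy'.2.2
  have hpath : IsPathConnected S := by
    refine ⟨y, hyS, ?_⟩
    rintro z ⟨⟨hz1, hz2, hz3, hz4⟩, hxz, hzy⟩
    rw [Prod.le_def, Prod.le_def] at hxz hzy
    have hxz1 := hxz.1; have hxz2 := hxz.2.1; have hxz3 := hxz.2.2
    have hzy1 := hzy.1; have hzy2 := hzy.2.1; have hzy3 := hzy.2.2
    set z1 : ℝ × ℝ × ℝ := (y.1, z.2.1, z.2.2) with hz1def
    set z2 : ℝ × ℝ × ℝ := (y.1, y.2.1, z.2.2) with hz2def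
    -- intermediate constraint facts
    have hc1 : y.1 * z.2.1 + z.2.2 - 1 ≤ 0 := by
      nlinarith [mul_nonneg (sub_nonneg.2 hzy1) (neg_nonneg.2 hz2)]
    have hc2 : y.1 * y.2.1 + z.2.2 - 1 ≤ 0 := by
      nlinarith [mul_nonneg (sub_nonneg.2 hzy2) (neg_nonneg.2 hy1)]
    have seg1 : segment ℝ z z1 ⊆ S := by
      intro p hp
      rw [segment_eq_image] at hp
      obtain ⟨t, ⟨ht0, ht1⟩, rfl⟩ := hp
      have e1 : ((1 - t) • z + t • z1).1 = (1 - t) * z.1 + t * y.1 := by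
        simp [hz1def]
      have e2 : ((1 - t) • z + t • z1).2.1 = z.2.1 := by
        have : ((1 - t) • z + t • z1).2.1 = (1 - t) * z.2.1 + t * z.2.1 := by
          simp [hz1def]
        rw [this]; ring
      have e3 : ((1 - t) • z + t • z1).2.2 = z.2.2 := by
        have : ((1 - t) • z + t • z1).2.2 = (1 - t) * z.2.2 + t * z.2.2 := by
          simp [hz1def]
        rw [this]; ring
      refine ⟨?_, ?_, ?_⟩
      · simp only [X13, Set.mem_setOf_eq, e1, e2, e3]
        refine ⟨?_, hz2, hz3, ?_⟩
        · nlinarith [mul_nonneg ht0 (neg_nonneg.2 hy1),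
            mul_nonneg (by linarith : (0:ℝ) ≤ 1 - t) (neg_nonneg.2 hz1)]
        · nlinarith [mul_nonneg ht0 (neg_nonneg.2 hc1),
            mul_nonneg (by linarith : (0:ℝ) ≤ 1 - t) (neg_nonneg.2 hz4)]
      · rw [Prod.le_def, Prod.le_def, e1, e2, e3]
        refine ⟨?_, hxz2, hxz3⟩
        nlinarith [mul_nonneg ht0 (sub_nonneg.2 hxy1),
          mul_nonneg (by linarith : (0:ℝ) ≤ 1 - t) (sub_nonneg.2 hxz1)]
      · rw [Prod.le_def, Prod.le_def, e1, e2, e3]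
        refine ⟨?_, hzy2, hzy3⟩
        nlinarith [mul_nonneg (by linarith : (0:ℝ) ≤ 1 - t) (sub_nonneg.2 hzy1)]
    have seg2 : segment ℝ z1 z2 ⊆ S := by
      intro p hp
      rw [segment_eq_image] at hp
      obtain ⟨t, ⟨ht0, ht1⟩, rfl⟩ := hp
      have e1 : ((1 - t) • z1 + t • z2).1 = y.1 := by
        have : ((1 - t) • z1 + t • z2).1 = (1 - t) * y.1 + t * y.1 := by
          simp [hz1def, hz2def]
        rw [this]; ring
      have e2 : ((1 - t) • z1 + t • z2).2.1 = (1 - t) * z.2.1 + t * y.2.1 := by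
        simp [hz1def, hz2def]
      have e3 : ((1 - t) • z1 + t • z2).2.2 = z.2.2 := by
        have : ((1 - t) • z1 + t • z2).2.2 = (1 - t) * z.2.2 + t * z.2.2 := by
          simp [hz1def, hz2def]
        rw [this]; ring
      refine ⟨?_, ?_, ?_⟩
      · simp only [X13, Set.mem_setOf_eq, e1, e2, e3]
        refine ⟨hy1, ?_, hz3, ?_⟩
        · nlinarith [mul_nonneg ht0 (neg_nonneg.2 hy2),
            mul_nonneg (by linarith : (0:ℝ) ≤ 1 - t) (neg_nonneg.2 hz2)]
        · nlinarith [mul_nonneg ht0 (neg_nonneg.2 hc2),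
            mul_nonneg (by linarith : (0:ℝ) ≤ 1 - t) (neg_nonneg.2 hc1)]
      · rw [Prod.le_def, Prod.le_def, e1, e2, e3]
        refine ⟨hxy1, ?_, hxz3⟩
        nlinarith [mul_nonneg ht0 (sub_nonneg.2 hxy2),
          mul_nonneg (by linarith : (0:ℝ) ≤ 1 - t) (sub_nonneg.2 hxz2)]
      · rw [Prod.le_def, Prod.le_def, e1, e2, e3]
        refine ⟨le_refl _, ?_, hzy3⟩
        nlinarith [mul_nonneg (by linarith : (0:ℝ) ≤ 1 - t) (sub_nonneg.2 hzy2)]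
    have seg3 : segment ℝ z2 y ⊆ S := by
      intro p hp
      rw [segment_eq_image] at hp
      obtain ⟨t, ⟨ht0, ht1⟩, rfl⟩ := hp
      have e1 : ((1 - t) • z2 + t • y).1 = y.1 := by
        have : ((1 - t) • z2 + t • y).1 = (1 - t) * y.1 + t * y.1 := by
          simp [hz2def]
        rw [this]; ring
      have e2 : ((1 - t) • z2 + t • y).2.1 = y.2.1 := by
        have : ((1 - t) • z2 + t • y).2.1 = (1 - t) * y.2.1 + t * y.2.1 := by
          simp [hz2def]
        rw [this]; ring
      have e3 : ((1 - t) • z2 + t • y).2.2 = (1 - t) * z.2.2 + t * y.2.2 := by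
        simp [hz2def]
      refine ⟨?_, ?_, ?_⟩
      · simp only [X13, Set.mem_setOf_eq, e1, e2, e3]
        refine ⟨hy1, hy2, ?_, ?_⟩
        · nlinarith [mul_nonneg ht0 (neg_nonneg.2 hy3),
            mul_nonneg (by linarith : (0:ℝ) ≤ 1 - t) (neg_nonneg.2 hz3)]
        · nlinarith [mul_nonneg ht0 (neg_nonneg.2 hy4),
            mul_nonneg (by linarith : (0:ℝ) ≤ 1 - t) (neg_nonneg.2 hc2)]
      · rw [Prod.le_def, Prod.le_def, e1, e2, e3]
        refine ⟨hxy1, hxy2, ?_⟩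
        nlinarith [mul_nonneg ht0 (sub_nonneg.2 hxy3),
          mul_nonneg (by linarith : (0:ℝ) ≤ 1 - t) (sub_nonneg.2 hxz3)]
      · rw [Prod.le_def, Prod.le_def, e1, e2, e3]
        refine ⟨le_refl _, le_refl _, ?_⟩
        nlinarith [mul_nonneg (by linarith : (0:ℝ) ≤ 1 - t) (sub_nonneg.2 hzy3)]
    exact (((key z z1 seg1).trans (key z1 z2 seg2)).trans (key z2 y seg3)).symm
  exact hpath.isConnected
end

section
/- Let X = {(u,v,w) ∈ ℝ³ : u ≤ 0, v ≤ 0, w ≤ 0, uv + w - 1 ≤ 0} with coordinatewise order. For x₀ = (u₀,v₀,w₀) ∈ X and x_α = (u_α,v_α,w₀) ∈ X with u_α < u₀ ≤ 0, the Hausdorff distance between the principal ideals x_α↓ and x₀↓ (as subsets of ℝ³ with Euclidean metric) is infinite (equivalently, for every M > 0 there exists z ∈ x₀↓ with dist(z, x_α↓) > M). -/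
/-!
Every point `y ≤ xα` of `X` satisfies `uα * y 1 + y 2 ≤ 1` (as `y 0 ≤ uα` and `y 1 ≤ 0`), so `xα↓` lies
in a half-space. Along the points `(u₀, t, min w₀ (1 - u₀ t)) ∈ x₀↓` the linear functional
`y ↦ uα * y 1 + y 2` tends to `+∞` as `t → -∞`, because `uα < 0` and `uα < u₀`; hence their distance to
the half-space, and a fortiori to `xα↓`, is unbounded.
-/

def X16 : Set (EuclideanSpace ℝ (Fin 3)) :=
  {p | p 0 ≤ 0 ∧ p 1 ≤ 0 ∧ p 2 ≤ 0 ∧ p 0 * p 1 + p 2 - 1 ≤ 0}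

def le16 (x y : EuclideanSpace ℝ (Fin 3)) : Prop := ∀ i : Fin 3, x i ≤ y i

def down16 (x : EuclideanSpace ℝ (Fin 3)) : Set (EuclideanSpace ℝ (Fin 3)) :=
  {z | z ∈ X16 ∧ le16 z x}

open Filter

lemma sub_le_opNorm_mul_infDist {E : Type*} [SeminormedAddCommGroup E] [NormedSpace ℝ E]
    (ℓ : StrongDual ℝ E) {b : ℝ} {S : Set E} (hS : S.Nonempty) (hSℓ : S ⊆ {y | ℓ y ≤ b}) (z : E) :
    ℓ z - b ≤ ‖ℓ‖ * Metric.infDist z S := by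
  have : Nonempty S := hS.to_subtype
  rw [Metric.infDist_eq_iInf, Real.mul_iInf_of_nonneg (norm_nonneg ℓ)]
  refine le_ciInf fun ⟨y, hy⟩ => ?_
  calc ℓ z - b ≤ ℓ (z - y) := by rw [map_sub]; linarith [show ℓ y ≤ b from hSℓ hy]
    _ ≤ ‖ℓ (z - y)‖ := Real.le_norm_self _
    _ ≤ ‖ℓ‖ * dist z y := by rw [dist_eq_norm]; exact ℓ.le_opNorm _

lemma down16_subset_halfSpace (x : EuclideanSpace ℝ (Fin 3)) :
    down16 x ⊆ {y | x 0 * y 1 + y 2 ≤ 1} := by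
  rintro y ⟨⟨-, hy1, -, hy⟩, hyx⟩
  have : x 0 * y 1 ≤ y 0 * y 1 := mul_le_mul_of_nonpos_right (hyx 0) hy1
  show x 0 * y 1 + y 2 ≤ 1
  linarith

lemma exists_mem_down16_lt {x : EuclideanSpace ℝ (Fin 3)} (hx : x ∈ X16) {c : ℝ} (hc : c < x 0)
    (K : ℝ) : ∃ z ∈ down16 x, K < c * z 1 + z 2 := by
  obtain ⟨hx0, -, hx2, -⟩ := hx
  have hc0 : c < 0 := hc.trans_le hx0
  have hlin : ∀ {a : ℝ} (d : ℝ), a < 0 → ∀ᶠ t in atBot, K < a * t + d := fun d ha =>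
    ((tendsto_id.const_mul_atBot_of_neg ha).atTop_add tendsto_const_nhds).eventually_gt_atTop K
  obtain ⟨t, htx, ht0, hKw, hKu⟩ := ((eventually_le_atBot (x 1)).and <| (eventually_le_atBot 0).and <|
    (hlin (x 2) hc0).and (hlin 1 (sub_neg.2 hc))).exists
  refine ⟨WithLp.toLp 2 ![x 0, t, min (x 2) (1 - x 0 * t)], ⟨⟨hx0, ht0, ?_, ?_⟩, ?_⟩, ?_⟩
  · exact (min_le_left _ _).trans hx2
  · show x 0 * t + min (x 2) (1 - x 0 * t) - 1 ≤ 0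
    linarith [min_le_right (x 2) (1 - x 0 * t)]
  · intro i
    fin_cases i
    exacts [le_rfl, htx, min_le_left _ _]
  · show K < c * t + min (x 2) (1 - x 0 * t)
    rcases min_cases (x 2) (1 - x 0 * t) with ⟨h, -⟩ | ⟨h, -⟩ <;> rw [h] <;> linarith

theorem stmt_16_general (u₀ v₀ w₀ uα vα : ℝ)
    (x₀ xα : EuclideanSpace ℝ (Fin 3))
    (hx₀ : x₀ = ![u₀, v₀, w₀]) (hxα : xα = ![uα, vα, w₀])
    (hx₀X : x₀ ∈ X16) (hxαX : xα ∈ X16)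
    (hu : uα < u₀) :
    ∀ M : ℝ, 0 < M → ∃ z ∈ down16 x₀, M < Metric.infDist z (down16 xα) := by
  intro M _
  have hxα0 : xα 0 = uα := by rw [hxα]; rfl
  set ℓ : StrongDual ℝ (EuclideanSpace ℝ (Fin 3)) :=
    uα • EuclideanSpace.proj 1 + EuclideanSpace.proj 2
  have hℓ (y : EuclideanSpace ℝ (Fin 3)) : ℓ y = uα * y 1 + y 2 := rfl
  have hsub : down16 xα ⊆ {y | ℓ y ≤ 1} := by
    simpa only [hℓ, hxα0] using down16_subset_halfSpace xα
  obtain ⟨z, hz, hzℓ⟩ := exists_mem_down16_lt hx₀X (by rw [hx₀]; exact hu) (1 + ‖ℓ‖ * M)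
  have hne : (down16 xα).Nonempty := ⟨xα, hxαX, fun _ => le_rfl⟩
  refine ⟨z, hz, lt_of_mul_lt_mul_left ?_ (norm_nonneg ℓ)⟩
  linarith [sub_le_opNorm_mul_infDist ℓ hne hsub z, hℓ z]

theorem stmt_16 (u₀ v₀ w₀ uα vα : ℝ)
    (x₀ xα : EuclideanSpace ℝ (Fin 3))
    (hx₀ : x₀ = ![u₀, v₀, w₀]) (hxα : xα = ![uα, vα, w₀])
    (hx₀X : x₀ ∈ X16) (hxαX : xα ∈ X16)
    (hu : uα < u₀) (hu0 : u₀ ≤ 0) :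
    ∀ M : ℝ, 0 < M → ∃ z ∈ down16 x₀, M < Metric.infDist z (down16 xα) :=
  stmt_16_general u₀ v₀ w₀ uα vα x₀ xα hx₀ hxα hx₀X hxαX hu
end

section
/- Let X = {(u,v,w) ∈ ℝ³ : u ≤ 0, v ≤ 0, w ≤ 0, uv + w - 1 ≤ 0} with coordinatewise order and Euclidean subspace topology. The map x ↦ x↓ from X to the closed subsets of X with the lower Vietoris topology is continuous at (0,0,0): explicitly, (0,0,0)↓ = X, and for every relatively open nonempty O ⊆ X there is an open neighborhood B of (0,0,0) in X such that x↓ ∩ O ≠ ∅ for all x ∈ B. -/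
def down13 (x : ℝ × ℝ × ℝ) : Set (ℝ × ℝ × ℝ) := {z | z ∈ X13 ∧ z ≤ x}

theorem stmt_17 :
    down13 (0, 0, 0) = X13 ∧
    ∀ O : Set (ℝ × ℝ × ℝ), (∃ V, IsOpen V ∧ O = V ∩ X13) → O.Nonempty →
      ∃ B : Set (ℝ × ℝ × ℝ), (∃ V, IsOpen V ∧ B = V ∩ X13) ∧
        ((0:ℝ), (0:ℝ), (0:ℝ)) ∈ B ∧ ∀ x ∈ B, (down13 x ∩ O).Nonempty := by
  constructor
  · ext z
    simp only [down13, X13, Set.mem_setOf_eq, Prod.le_def]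
    constructor
    · rintro ⟨h, -⟩; exact h
    · rintro ⟨h1, h2, h3, h4⟩
      exact ⟨⟨h1, h2, h3, h4⟩, h1, h2, h3⟩
  · rintro O ⟨V, hV, rfl⟩ ⟨⟨u, v, w⟩, hpV, hu, hv, hw, hc⟩
    dsimp only at hu hv hw hc
    obtain ⟨ε, hε, hball⟩ := Metric.isOpen_iff.mp hV (u, v, w) hpV
    set A : ℝ := 1 - u - v with hA
    have hA1 : 1 ≤ A := by simp only [hA]; linarith
    set s : ℝ := 1 / (2 * A) with hs
    have hspos : 0 < s := by positivity
    have hsA : s * A = 1 / 2 := by field_simp [hs]; rw [hs]; field_simp [show A ≠ 0 by linarith]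
    have hs_le : s ≤ 1 / 2 := by
      rw [← hsA]; nlinarith
    set t : ℝ := min 1 (ε / 2) with ht
    have htpos : 0 < t := lt_min one_pos (by linarith)
    have ht1 : t ≤ 1 := min_le_left _ _
    have htε : t < ε := lt_of_le_of_lt (min_le_right _ _) (by linarith)
    set p' : ℝ × ℝ × ℝ := (u - t * s, v - t * s, w - t) with hp'
    have hts : 0 < t * s := mul_pos htpos hspos
    have hp'X : p' ∈ X13 := by
      refine ⟨by dsimp [p']; linarith, by dsimp [p']; linarith, by dsimp [p']; linarith, ?_⟩
      dsimp [p']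
      nlinarith [mul_pos htpos hspos, sq_nonneg s, sq_nonneg t,
        mul_nonneg htpos.le hspos.le, mul_nonneg (mul_nonneg htpos.le hspos.le) hspos.le]
    have hp'V : p' ∈ V := by
      apply hball
      rw [Metric.mem_ball, Prod.dist_eq, Prod.dist_eq]
      have h1 : dist (p'.1) u < ε := by
        rw [Real.dist_eq]; dsimp [p']
        rw [show u - t * s - u = -(t * s) by ring, abs_neg, abs_of_pos hts]
        nlinarith
      have h2 : dist (p'.2.1) v < ε := by
        rw [Real.dist_eq]; dsimp [p']
        rw [show v - t * s - v = -(t * s) by ring, abs_neg, abs_of_pos hts]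
        nlinarith
      have h3 : dist (p'.2.2) w < ε := by
        rw [Real.dist_eq]; dsimp [p']
        rw [show w - t - w = -t by ring, abs_neg, abs_of_pos htpos]
        exact htε
      exact max_lt h1 (max_lt h2 h3)
    refine ⟨({x | p'.1 < x.1} ∩ {x | p'.2.1 < x.2.1} ∩ {x | p'.2.2 < x.2.2}) ∩ X13,
      ⟨_, ?_, rfl⟩, ⟨⟨⟨?_, ?_⟩, ?_⟩, ?_⟩, ?_⟩
    · exact (((isOpen_lt continuous_const continuous_fst).inter
        (isOpen_lt continuous_const (continuous_fst.comp continuous_snd))).inter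
        (isOpen_lt continuous_const (continuous_snd.comp continuous_snd)))
    · dsimp; linarith
    · dsimp; linarith
    · dsimp; linarith
    · exact ⟨le_refl 0, le_refl 0, le_refl 0, by norm_num⟩
    · rintro x ⟨⟨⟨h1, h2⟩, h3⟩, hxX⟩
      exact ⟨p', ⟨hp'X, h1.le, h2.le, h3.le⟩, hp'V, hp'X⟩
end

section
/- Let X = {(u,v,w) ∈ ℝ³ : u ≤ 0, v ≤ 0, w ≤ 0, uv + w - 1 ≤ 0} with coordinatewise order. Fix (u₀,v₀,w₀) ∈ X with v₀ < 0 and define the curve C = {(u₀, v, v/(v - v₀) + w₀) : v₀ < v ≤ 0}. Then C ⊆ X, C is closed in X, C ∩ (u₀,v₀,w₀)↓ = ∅, but for every v ∈ (v₀, 0], C ∩ (u₀,v,w₀)↓ ≠ ∅. -/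
theorem stmt_18 (u₀ v₀ w₀ : ℝ) (hx : (u₀, v₀, w₀) ∈ X13) (hv₀ : v₀ < 0)
    (C : Set (ℝ × ℝ × ℝ))
    (hC : C = {p | ∃ v : ℝ, v₀ < v ∧ v ≤ 0 ∧ p = (u₀, v, v / (v - v₀) + w₀)}) :
    C ⊆ X13 ∧
    (∃ F : Set (ℝ × ℝ × ℝ), IsClosed F ∧ C = F ∩ X13) ∧
    C ∩ down13 (u₀, v₀, w₀) = ∅ ∧
    ∀ v : ℝ, v₀ < v → v ≤ 0 → (C ∩ down13 (u₀, v, w₀)).Nonempty := by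
  obtain ⟨hu₀, hv₀', hw₀, hP₀⟩ := hx
  simp only at hu₀ hv₀' hw₀ hP₀
  -- key facts for a parameter v ∈ (v₀, 0]
  have key : ∀ v : ℝ, v₀ < v → v ≤ 0 → (u₀, v, v / (v - v₀) + w₀) ∈ X13 := by
    intro v hv1 hv2
    have hd : 0 < v - v₀ := sub_pos.mpr hv1
    have hq : v / (v - v₀) ≤ 0 := div_nonpos_of_nonpos_of_nonneg hv2 hd.le
    refine ⟨hu₀, hv2, ?_, ?_⟩
    · simpa using add_nonpos hq hw₀
    · have hmul : u₀ * v ≤ u₀ * v₀ := mul_le_mul_of_nonpos_left hv1.le hu₀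
      simp only
      nlinarith
  refine ⟨?_, ?_, ?_, ?_⟩
  · intro p hp
    rw [hC] at hp
    obtain ⟨v, hv1, hv2, rfl⟩ := hp
    exact key v hv1 hv2
  · refine ⟨{p | p.1 = u₀ ∧ p.2.2 ≤ w₀ ∧ (p.2.2 - w₀) * (p.2.1 - v₀) = p.2.1}, ?_, ?_⟩
    · have h1 : IsClosed {p : ℝ × ℝ × ℝ | p.1 = u₀} :=
        isClosed_eq continuous_fst continuous_const
      have h2 : IsClosed {p : ℝ × ℝ × ℝ | p.2.2 ≤ w₀} :=
        isClosed_le (continuous_snd.snd) continuous_const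
      have h3 : IsClosed {p : ℝ × ℝ × ℝ | (p.2.2 - w₀) * (p.2.1 - v₀) = p.2.1} :=
        isClosed_eq (((continuous_snd.snd).sub continuous_const).mul
          ((continuous_snd.fst).sub continuous_const)) (continuous_snd.fst)
      exact h1.inter (h2.inter h3)
    · ext p
      rw [hC]
      constructor
      · rintro ⟨v, hv1, hv2, rfl⟩
        have hd : 0 < v - v₀ := sub_pos.mpr hv1
        have hq : v / (v - v₀) ≤ 0 := div_nonpos_of_nonpos_of_nonneg hv2 hd.le
        refine ⟨⟨rfl, by simp only; linarith, ?_⟩, key v hv1 hv2⟩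
        simp only
        field_simp
        ring
      · rintro ⟨⟨h1, h2, h3⟩, hpx⟩
        obtain ⟨hx1, hx2, hx3, hx4⟩ := hpx
        have hvlt : v₀ < p.2.1 := by nlinarith
        have hd : 0 < p.2.1 - v₀ := sub_pos.mpr hvlt
        refine ⟨p.2.1, hvlt, hx2, ?_⟩
        have hw : p.2.2 = p.2.1 / (p.2.1 - v₀) + w₀ := by
          field_simp
          linarith [h3]
        rw [← h1, ← hw]
  · ext p
    simp only [Set.mem_inter_iff, Set.mem_empty_iff_false, iff_false]
    rintro ⟨hp, _, hle⟩
    rw [hC] at hp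
    obtain ⟨v, hv1, hv2, rfl⟩ := hp
    exact absurd hle.2.1 (not_le.mpr hv1)
  · intro v hv1 hv2
    have hd : 0 < v - v₀ := sub_pos.mpr hv1
    have hq : v / (v - v₀) ≤ 0 := div_nonpos_of_nonpos_of_nonneg hv2 hd.le
    refine ⟨(u₀, v, v / (v - v₀) + w₀), ?_, key v hv1 hv2, ?_⟩
    · rw [hC]; exact ⟨v, hv1, hv2, rfl⟩
    · exact ⟨le_refl _, le_refl _, by linarith⟩
end
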